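/- arXiv:2003.03889 — 2 statements merged into one kernel-verified Lean document; each statement's English description precedes it below -/
import Mathlib

section
/- Let D, M ∈ ℝ^{s×s} and t_L, t_R ∈ ℝ^s, where M is symmetric positive definite and M·D + (M·D)ᵀ = t_R·t_Rᵀ − t_L·t_Lᵀ. Then for every λ ∈ ℂ with Re λ < 0, the complex matrix obtained by entrywise complexifying D + M⁻¹·t_L·t_Lᵀ and subtracting λ·I is invertible; in particular the SBP-SAT scheme for the scalar test equation u' = λu is uniquely solvable whenever Re λ < 0. -/
/-!
Energy method. With `A = D + M⁻¹ t_L t_Lᵀ` the SBP property gives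
`M A + (M A)ᵀ = t_R t_Rᵀ + t_L t_Lᵀ`, which is positive semidefinite. For an eigenpair
`A v = λ v` over `ℂ` this yields `2 Re λ · v* M v = v* (M A + (M A)ᵀ) v ≥ 0`, and `v* M v > 0`
forces `Re λ ≥ 0`; so `A - λ I` has trivial kernel whenever `Re λ < 0`.
-/

open Matrix
open scoped ComplexOrder MatrixOrder

namespace Matrix

variable {n : Type*} [Fintype n]

theorem PosSemidef.map_ofReal {M : Matrix n n ℝ} (hM : M.PosSemidef) :
    (M.map Complex.ofReal).PosSemidef := by
  classical
  obtain ⟨B, rfl⟩ := CStarAlgebra.nonneg_iff_eq_star_mul_self.mp hM.nonneg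
  have h : (star B * B).map Complex.ofReal = (B.map Complex.ofReal)ᴴ * B.map Complex.ofReal := by
    rw [← conjTranspose_map _ (fun _ => (Complex.conj_ofReal _).symm), ← star_eq_conjTranspose]
    exact Matrix.map_mul (f := Complex.ofRealHom)
  exact h ▸ posSemidef_conjTranspose_mul_self _

theorem PosDef.map_ofReal [DecidableEq n] {M : Matrix n n ℝ} (hM : M.PosDef) :
    (M.map Complex.ofReal).PosDef :=
  hM.posSemidef.map_ofReal.posDef_iff_isUnit.mpr (hM.isUnit.map Complex.ofRealHom.mapMatrix)

theorem map_ofReal_mul_add_conjTranspose (X Y : Matrix n n ℝ) :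
    X.map Complex.ofReal * Y.map Complex.ofReal + (X.map Complex.ofReal * Y.map Complex.ofReal)ᴴ
      = (X * Y + (X * Y)ᵀ).map Complex.ofReal := by
  have hmul : (X * Y).map Complex.ofReal = X.map Complex.ofReal * Y.map Complex.ofReal :=
    Matrix.map_mul (f := Complex.ofRealHom)
  rw [Matrix.map_add _ Complex.ofReal_add, ← hmul,
    ← conjTranspose_map _ fun _ => (Complex.conj_ofReal _).symm,
    conjTranspose_eq_transpose_of_trivial]

variable {𝕜 : Type*} [RCLike 𝕜] {N B : Matrix n n 𝕜} {μ : 𝕜}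

theorem star_dotProduct_conjTranspose_mulVec (X : Matrix n n 𝕜) (v : n → 𝕜) :
    star v ⬝ᵥ (Xᴴ *ᵥ v) = star (star v ⬝ᵥ (X *ᵥ v)) := by
  rw [star_dotProduct, star_mulVec, conjTranspose_conjTranspose, dotProduct_mulVec]

theorem re_nonneg_of_mulVec_eq_smul (hN : N.PosDef) (hNB : (N * B + (N * B)ᴴ).PosSemidef)
    {v : n → 𝕜} (hv : v ≠ 0) (hBv : B *ᵥ v = μ • v) : 0 ≤ RCLike.re μ := by
  obtain ⟨hq_re, hq_im⟩ := RCLike.pos_iff.mp (hN.dotProduct_mulVec_pos hv)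
  have hform : star v ⬝ᵥ ((N * B + (N * B)ᴴ) *ᵥ v)
      = μ * (star v ⬝ᵥ (N *ᵥ v)) + star (μ * (star v ⬝ᵥ (N *ᵥ v))) := by
    rw [add_mulVec, dotProduct_add, star_dotProduct_conjTranspose_mulVec, ← mulVec_mulVec, hBv,
      mulVec_smul, dotProduct_smul, smul_eq_mul]
  have h := (RCLike.nonneg_iff.mp (hNB.dotProduct_mulVec_nonneg v)).1
  rw [hform, map_add, RCLike.star_def, RCLike.conj_re, RCLike.mul_re, hq_im, mul_zero,
    sub_zero] at h
  nlinarith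

theorem isUnit_sub_smul_one_of_re_neg [DecidableEq n] (hN : N.PosDef)
    (hNB : (N * B + (N * B)ᴴ).PosSemidef) (hμ : RCLike.re μ < 0) : IsUnit (B - μ • 1) := by
  rw [isUnit_iff_isUnit_det, isUnit_iff_ne_zero]
  intro hdet
  obtain ⟨v, hv, hBv⟩ := exists_mulVec_eq_zero_iff.mpr hdet
  rw [sub_mulVec, smul_mulVec, one_mulVec, sub_eq_zero] at hBv
  exact hμ.not_ge (re_nonneg_of_mulVec_eq_smul hN hNB hv hBv)

end Matrix

theorem sbp_sat_mul_add_transpose {R n : Type*} [CommRing R] [Fintype n] [DecidableEq n]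
    {D M : Matrix n n R} {tL tR : n → R} (hM : IsUnit M.det)
    (hSBP : M * D + (M * D)ᵀ = vecMulVec tR tR - vecMulVec tL tL) :
    M * (D + M⁻¹ * vecMulVec tL tL) + (M * (D + M⁻¹ * vecMulVec tL tL))ᵀ
      = vecMulVec tR tR + vecMulVec tL tL := by
  rw [mul_add, ← mul_assoc, mul_nonsing_inv _ hM, one_mul, transpose_add, transpose_vecMulVec,
    add_add_add_comm, hSBP]
  abel

theorem sbp_sat_solvable_of_re_neg_general
    {s : ℕ}
    (D M : Matrix (Fin s) (Fin s) ℝ) (tL tR : Fin s → ℝ)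
    (hM : M.PosDef)
    (hSBP : M * D + (M * D)ᵀ = vecMulVec tR tR - vecMulVec tL tL)
    (lam : ℂ) (hlam : lam.re < 0) :
    IsUnit ((D + M⁻¹ * vecMulVec tL tL).map Complex.ofReal -
      lam • (1 : Matrix (Fin s) (Fin s) ℂ)) := by
  have hsym := sbp_sat_mul_add_transpose ((isUnit_iff_isUnit_det M).mp hM.isUnit) hSBP
  have hboundary : (vecMulVec tR tR + vecMulVec tL tL).PosSemidef := by
    simpa only [star_trivial] using
      (posSemidef_vecMulVec_self_star tR).add (posSemidef_vecMulVec_self_star tL)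
  refine isUnit_sub_smul_one_of_re_neg hM.map_ofReal ?_ hlam
  rw [map_ofReal_mul_add_conjTranspose, hsym]
  exact hboundary.map_ofReal

/-- For an SBP operator and any `λ ∈ ℂ` with `Re λ < 0`, the
complexified matrix `(D + M⁻¹ t_L t_Lᵀ) − λ I` is invertible; i.e. the SBP-SAT
scheme for `u' = λ u` is uniquely solvable whenever `Re λ < 0`. -/
theorem sbp_sat_solvable_of_re_neg
    {s : ℕ} (hs : 1 ≤ s)
    (D M : Matrix (Fin s) (Fin s) ℝ) (tL tR : Fin s → ℝ)
    (hM : M.PosDef)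
    (hSBP : M * D + (M * D)ᵀ = vecMulVec tR tR - vecMulVec tL tL)
    (lam : ℂ) (hlam : lam.re < 0) :
    IsUnit ((D + M⁻¹ * vecMulVec tL tL).map Complex.ofReal -
      lam • (1 : Matrix (Fin s) (Fin s) ℂ)) :=
  sbp_sat_solvable_of_re_neg_general D M tL tR hM hSBP lam hlam
end

section
/- Let D, M ∈ ℝ^{s×s} and t_L, t_R ∈ ℝ^s, where M is symmetric positive definite, M·D + (M·D)ᵀ = t_R·t_Rᵀ − t_L·t_Lᵀ, D·𝟙 = 0, t_Lᵀ·𝟙 = 1 and t_Rᵀ·𝟙 = 1, and suppose there exists τ ∈ ℝ^s with D·τ = 𝟙 (first-order accuracy). Let o ∈ ℝ^s be nonzero with Dᵀ·M·o = 0, let F = I − o·(M·o)ᵀ/(oᵀ·M·o), and let X ∈ ℝ^{s×s} satisfy D·X = F and t_Lᵀ·X = 0. Then the row vector t_Rᵀ·X equals 𝟙ᵀ·M; consequently the SBP projection scheme is a Runge–Kutta method whose weight vector is b = M·𝟙 (up to the time scaling). -/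
/-!
Summing the rows of the SBP property `M D + (M D)ᵀ = t_R t_Rᵀ - t_L t_Lᵀ` and using `D 𝟙 = 0`
gives `𝟙ᵀ M D = t_Rᵀ - t_Lᵀ`, a discrete integration by parts. Multiplying by `X` on the right,
`t_Rᵀ X = t_Rᵀ X - t_Lᵀ X = 𝟙ᵀ M D X = 𝟙ᵀ M F`, and the projection `F` fixes `𝟙ᵀ M` because
`𝟙ᵀ M o = (D τ)ᵀ M o = τᵀ Dᵀ M o = 0`.
-/

open Matrix

variable {n R : Type*} [Fintype n] [CommRing R]

theorem Matrix.mulVec_dotProduct_eq_zero_of_transpose_mulVec_eq_zero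
    {D : Matrix n n R} {w : n → R} (hw : Dᵀ *ᵥ w = 0) (τ : n → R) :
    (D *ᵥ τ) ⬝ᵥ w = 0 := by
  rw [dotProduct_comm, dotProduct_mulVec, ← mulVec_transpose, hw, zero_dotProduct]

theorem Matrix.vecMul_sub_smul_vecMulVec_of_dotProduct_eq_zero [DecidableEq n]
    {w o : n → R} (hwo : w ⬝ᵥ o = 0) (c : R) (p : n → R) :
    w ᵥ* (1 - c • vecMulVec o p) = w := by
  rw [vecMul_sub, vecMul_one, vecMul_smul, vecMul_vecMulVec, hwo, zero_smul, smul_zero, sub_zero]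

theorem Matrix.one_vecMul_mul_eq_sub_of_sbp {M D : Matrix n n R} {tL tR : n → R}
    (hSBP : M * D + (M * D)ᵀ = vecMulVec tR tR - vecMulVec tL tL)
    (hD1 : D *ᵥ 1 = 0) (htL1 : tL ⬝ᵥ 1 = 1) (htR1 : tR ⬝ᵥ 1 = 1) :
    1 ᵥ* (M * D) = tR - tL := by
  have hsum := congrArg (fun A => 1 ᵥ* A) hSBP
  simp only [vecMul_add, vecMul_sub, vecMul_transpose, vecMul_vecMulVec] at hsum
  rwa [← mulVec_mulVec, hD1, mulVec_zero, add_zero, dotProduct_comm, htR1, dotProduct_comm,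
    htL1, one_smul, one_smul] at hsum

theorem sbp_projection_runge_kutta_weights_general
    {s : ℕ}
    (D M : Matrix (Fin s) (Fin s) ℝ) (tL tR : Fin s → ℝ)
    (hSBP : M * D + (M * D)ᵀ = vecMulVec tR tR - vecMulVec tL tL)
    (hD1 : D *ᵥ (1 : Fin s → ℝ) = 0)
    (htL1 : tL ⬝ᵥ (1 : Fin s → ℝ) = 1)
    (htR1 : tR ⬝ᵥ (1 : Fin s → ℝ) = 1)
    (hacc : ∃ τ : Fin s → ℝ, D *ᵥ τ = 1)
    (o : Fin s → ℝ) (hoD : Dᵀ *ᵥ (M *ᵥ o) = 0)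
    (F : Matrix (Fin s) (Fin s) ℝ)
    (hF : F = 1 - (o ⬝ᵥ (M *ᵥ o))⁻¹ • vecMulVec o (M *ᵥ o))
    (X : Matrix (Fin s) (Fin s) ℝ)
    (hX : D * X = F) (hXL : tL ᵥ* X = 0) :
    tR ᵥ* X = (1 : Fin s → ℝ) ᵥ* M := by
  obtain ⟨τ, hτ⟩ := hacc
  have hMo : (1 ᵥ* M) ⬝ᵥ o = 0 := by
    rw [← dotProduct_mulVec, ← hτ]
    exact mulVec_dotProduct_eq_zero_of_transpose_mulVec_eq_zero hoD τ
  calc tR ᵥ* X = (tR - tL) ᵥ* X := by rw [sub_vecMul, hXL, sub_zero]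
    _ = (1 ᵥ* M) ᵥ* F := by
      rw [← one_vecMul_mul_eq_sub_of_sbp hSBP hD1 htL1 htR1, vecMul_vecMul, Matrix.mul_assoc, hX,
        ← vecMul_vecMul]
    _ = 1 ᵥ* M := by rw [hF, vecMul_sub_smul_vecMulVec_of_dotProduct_eq_zero hMo]

/-- Under the SBP property, consistency (`D 𝟙 = 0`, `t_Lᵀ 𝟙 = 1`,
`t_Rᵀ 𝟙 = 1`), first-order accuracy (`∃ τ, D τ = 𝟙`), and with filter `F` and
matrix representation `X` of `J F`, the row vector `t_Rᵀ X` equals `𝟙ᵀ M`;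
i.e. the SBP projection scheme is a Runge-Kutta method with weights `b = M 𝟙`
(up to time scaling). -/
theorem sbp_projection_runge_kutta_weights
    {s : ℕ} (hs : 1 ≤ s)
    (D M : Matrix (Fin s) (Fin s) ℝ) (tL tR : Fin s → ℝ)
    (hM : M.PosDef)
    (hSBP : M * D + (M * D)ᵀ = vecMulVec tR tR - vecMulVec tL tL)
    (hD1 : D *ᵥ (1 : Fin s → ℝ) = 0)
    (htL1 : tL ⬝ᵥ (1 : Fin s → ℝ) = 1)
    (htR1 : tR ⬝ᵥ (1 : Fin s → ℝ) = 1)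
    (hacc : ∃ τ : Fin s → ℝ, D *ᵥ τ = 1)
    (o : Fin s → ℝ) (ho : o ≠ 0) (hoD : Dᵀ *ᵥ (M *ᵥ o) = 0)
    (F : Matrix (Fin s) (Fin s) ℝ)
    (hF : F = 1 - (o ⬝ᵥ (M *ᵥ o))⁻¹ • vecMulVec o (M *ᵥ o))
    (X : Matrix (Fin s) (Fin s) ℝ)
    (hX : D * X = F) (hXL : tL ᵥ* X = 0) :
    tR ᵥ* X = (1 : Fin s → ℝ) ᵥ* M :=
  sbp_projection_runge_kutta_weights_general D M tL tR hSBP hD1 htL1 htR1 hacc o hoD F hF X hX hXL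
end
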